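/- Let V be a finite dimensional real vector space (configuration space), and consider a grid field φ : {0,...,N} × {0,...,A} → V with 𝓛_a^j := 𝓛_d(Δ_a^j, φ_a^j, φ_a^{j+1}, φ_{a+1}^j). Define the space-evolution Lagrangian N_d(𝛗_a, 𝛗_{a+1}) := Σ_{j=0}^{N-1} 𝓛_a^j on V^{N+1} × V^{N+1}, where 𝛗_a := (φ_a^0,...,φ_a^N). Then the discrete Euler-Lagrange equations D₁N_d(𝛗_a, 𝛗_{a+1}) + D₂N_d(𝛗_{a-1}, 𝛗_a) = 0 for a = 1,...,A-1 hold if and only if: (i) D₁𝓛_a^j + D₂𝓛_a^{j-1} + D₃𝓛_{a-1}^j = 0 for j = 1,...,N-1, a = 1,...,A-1; (ii) D₁𝓛_a^0 + D₃𝓛_{a-1}^0 = 0 for a = 1,...,A-1; (iii) D₂𝓛_a^{N-1} = 0 for a = 1,...,A-1 (discrete zero-momentum boundary conditions in time). -/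

import Mathlib

noncomputable section

variable {V : Type*} [NormedAddCommGroup V] [NormedSpace ℝ V]

/-- Partial differential of `𝓛 : V³ → ℝ` in its first slot. -/
def T1 (L : V × V × V → ℝ) (p : V × V × V) : V →L[ℝ] ℝ :=
  fderiv ℝ (fun x => L (x, p.2.1, p.2.2)) p.1

/-- Partial differential of `𝓛 : V³ → ℝ` in its second slot. -/
def T2 (L : V × V × V → ℝ) (p : V × V × V) : V →L[ℝ] ℝ :=
  fderiv ℝ (fun x => L (p.1, x, p.2.2)) p.2.1

/-- Partial differential of `𝓛 : V³ → ℝ` in its third slot. -/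
def T3 (L : V × V × V → ℝ) (p : V × V × V) : V →L[ℝ] ℝ :=
  fderiv ℝ (fun x => L (p.1, p.2.1, x)) p.2.2

/-- Partial differential of `L : E × F → ℝ` in the first factor. -/
def pD1 {E F : Type*} [NormedAddCommGroup E] [NormedSpace ℝ E]
    [NormedAddCommGroup F] [NormedSpace ℝ F]
    (L : E × F → ℝ) (p : E × F) : E →L[ℝ] ℝ :=
  fderiv ℝ (fun x => L (x, p.2)) p.1

/-- Partial differential of `L : E × F → ℝ` in the second factor. -/
def pD2 {E F : Type*} [NormedAddCommGroup E] [NormedSpace ℝ E]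
    [NormedAddCommGroup F] [NormedSpace ℝ F]
    (L : E × F → ℝ) (p : E × F) : F →L[ℝ] ℝ :=
  fderiv ℝ (fun y => L (p.1, y)) p.2

lemma T1_eq (L : V × V × V → ℝ) (h : Differentiable ℝ L) (p : V × V × V) (v : V) :
    T1 L p v = fderiv ℝ L p (v, 0, 0) := by
  have hg : HasFDerivAt (fun x : V => ((x, p.2.1, p.2.2) : V × V × V))
      ((ContinuousLinearMap.id ℝ V).prod 0) p.1 :=
    HasFDerivAt.prodMk (hasFDerivAt_id p.1) (hasFDerivAt_const _ _)
  have := ((h p).hasFDerivAt.comp p.1 (by simpa using hg)).fderiv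
  rw [T1, show (fun x => L (x, p.2.1, p.2.2)) = L ∘ fun x => (x, p.2) from rfl, this]
  simp
  rfl

lemma T2_eq (L : V × V × V → ℝ) (h : Differentiable ℝ L) (p : V × V × V) (v : V) :
    T2 L p v = fderiv ℝ L p (0, v, 0) := by
  have hg : HasFDerivAt (fun x : V => ((p.1, x, p.2.2) : V × V × V))
      ((0 : V →L[ℝ] V).prod ((ContinuousLinearMap.id ℝ V).prod 0)) p.2.1 :=
    HasFDerivAt.prodMk (hasFDerivAt_const _ _) (HasFDerivAt.prodMk (hasFDerivAt_id _) (hasFDerivAt_const _ _))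
  have := ((h p).hasFDerivAt.comp p.2.1 (by simpa using hg)).fderiv
  rw [T2, show (fun x => L (p.1, x, p.2.2)) = L ∘ fun x => (p.1, x, p.2.2) from rfl, this]
  simp

lemma T3_eq (L : V × V × V → ℝ) (h : Differentiable ℝ L) (p : V × V × V) (v : V) :
    T3 L p v = fderiv ℝ L p (0, 0, v) := by
  have hg : HasFDerivAt (fun x : V => ((p.1, p.2.1, x) : V × V × V))
      ((0 : V →L[ℝ] V).prod ((0 : V →L[ℝ] V).prod (ContinuousLinearMap.id ℝ V))) p.2.2 :=
    HasFDerivAt.prodMk (hasFDerivAt_const _ _) (HasFDerivAt.prodMk (hasFDerivAt_const _ _) (hasFDerivAt_id _))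
  have := ((h p).hasFDerivAt.comp p.2.2 (by simpa using hg)).fderiv
  rw [T3, show (fun x => L (p.1, p.2.1, x)) = L ∘ fun x => (p.1, p.2.1, x) from rfl, this]
  simp

lemma pD1_sum {N : ℕ} (Lg : ℕ → V × V × V → ℝ) (h : ∀ j, Differentiable ℝ (Lg j))
    (p : (Fin (N + 1) → V) × (Fin (N + 1) → V)) (w : Fin (N + 1) → V) :
    pD1 (fun q : (Fin (N + 1) → V) × (Fin (N + 1) → V) =>
        ∑ j : Fin N, Lg j.1 (q.1 j.castSucc, q.1 j.succ, q.2 j.castSucc)) p w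
      = ∑ j : Fin N, fderiv ℝ (Lg j.1) (p.1 j.castSucc, p.1 j.succ, p.2 j.castSucc)
          (w j.castSucc, w j.succ, 0) := by
  have key : HasFDerivAt
      (fun x : Fin (N + 1) → V => ∑ j : Fin N, Lg j.1 (x j.castSucc, x j.succ, p.2 j.castSucc))
      (∑ j : Fin N, (fderiv ℝ (Lg j.1) (p.1 j.castSucc, p.1 j.succ, p.2 j.castSucc)).comp
        (((ContinuousLinearMap.proj j.castSucc : (Fin (N+1) → V) →L[ℝ] V)).prod
          (((ContinuousLinearMap.proj j.succ : (Fin (N+1) → V) →L[ℝ] V)).prod 0))) p.1 := by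
    apply HasFDerivAt.fun_sum
    intro j _
    have hg : HasFDerivAt
        (fun x : Fin (N + 1) → V => ((x j.castSucc, x j.succ, p.2 j.castSucc) : V × V × V))
        (((ContinuousLinearMap.proj j.castSucc : (Fin (N+1) → V) →L[ℝ] V)).prod
          (((ContinuousLinearMap.proj j.succ : (Fin (N+1) → V) →L[ℝ] V)).prod 0)) p.1 :=
        by
      have h1 : HasFDerivAt (fun x : Fin (N + 1) → V => x j.castSucc)
          ((ContinuousLinearMap.proj j.castSucc : (Fin (N+1) → V) →L[ℝ] V)) p.1 := (hasFDerivAt_apply _ _)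
      have h2 : HasFDerivAt (fun x : Fin (N + 1) → V => x j.succ)
          ((ContinuousLinearMap.proj j.succ : (Fin (N+1) → V) →L[ℝ] V)) p.1 := (hasFDerivAt_apply _ _)
      exact h1.prodMk (h2.prodMk (hasFDerivAt_const _ _))
    exact ((h j.1 _).hasFDerivAt.comp p.1 hg)
  rw [pD1, key.fderiv]
  simp [ContinuousLinearMap.sum_apply]

lemma pD2_sum {N : ℕ} (Lg : ℕ → V × V × V → ℝ) (h : ∀ j, Differentiable ℝ (Lg j))
    (p : (Fin (N + 1) → V) × (Fin (N + 1) → V)) (w : Fin (N + 1) → V) :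
    pD2 (fun q : (Fin (N + 1) → V) × (Fin (N + 1) → V) =>
        ∑ j : Fin N, Lg j.1 (q.1 j.castSucc, q.1 j.succ, q.2 j.castSucc)) p w
      = ∑ j : Fin N, fderiv ℝ (Lg j.1) (p.1 j.castSucc, p.1 j.succ, p.2 j.castSucc)
          (0, 0, w j.castSucc) := by
  have key : HasFDerivAt
      (fun y : Fin (N + 1) → V => ∑ j : Fin N, Lg j.1 (p.1 j.castSucc, p.1 j.succ, y j.castSucc))
      (∑ j : Fin N, (fderiv ℝ (Lg j.1) (p.1 j.castSucc, p.1 j.succ, p.2 j.castSucc)).comp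
        ((0 : (Fin (N+1) → V) →L[ℝ] V).prod
          ((0 : (Fin (N+1) → V) →L[ℝ] V).prod ((ContinuousLinearMap.proj j.castSucc : (Fin (N+1) → V) →L[ℝ] V))))) p.2 := by
    apply HasFDerivAt.fun_sum
    intro j _
    have hg : HasFDerivAt
        (fun y : Fin (N + 1) → V => ((p.1 j.castSucc, p.1 j.succ, y j.castSucc) : V × V × V))
        ((0 : (Fin (N+1) → V) →L[ℝ] V).prod
          ((0 : (Fin (N+1) → V) →L[ℝ] V).prod ((ContinuousLinearMap.proj j.castSucc : (Fin (N+1) → V) →L[ℝ] V)))) p.2 :=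
        by
      have h3 : HasFDerivAt (fun y : Fin (N + 1) → V => y j.castSucc)
          ((ContinuousLinearMap.proj j.castSucc : (Fin (N+1) → V) →L[ℝ] V)) p.2 := (hasFDerivAt_apply _ _)
      exact HasFDerivAt.prodMk (hasFDerivAt_const _ _) (HasFDerivAt.prodMk (hasFDerivAt_const _ _) h3)
    exact ((h j.1 _).hasFDerivAt.comp p.2 hg)
  rw [pD2, key.fderiv]
  simp [ContinuousLinearMap.sum_apply]

lemma sum_single_cast {N : ℕ} (f : Fin N → V →L[ℝ] ℝ) (k : Fin (N + 1)) (v : V) :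
    ∑ i : Fin N, f i ((Pi.single k v : Fin (N + 1) → V) i.castSucc) =
      if h : (k : ℕ) < N then f ⟨(k : ℕ), h⟩ v else 0 := by
  split_ifs with h
  · rw [Finset.sum_eq_single (⟨(k : ℕ), h⟩ : Fin N)]
    · have : ((⟨(k : ℕ), h⟩ : Fin N).castSucc : Fin (N + 1)) = k := by
        simp [Fin.ext_iff]
      rw [this, Pi.single_eq_same]
    · intro i _ hne
      have hval : (i : ℕ) ≠ (k : ℕ) := by
        intro e
        exact hne (Fin.ext (by simpa using e))
      have hik : (i.castSucc : Fin (N + 1)) ≠ k := by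
        intro e
        exact hval (by simpa using congrArg Fin.val e)
      rw [Pi.single_eq_of_ne hik, map_zero]
    · simp
  · apply Finset.sum_eq_zero
    intro i _
    have hik : (i.castSucc : Fin (N + 1)) ≠ k := by
      intro e
      have := congrArg Fin.val e
      simp only [Fin.coe_castSucc] at this
      have := i.isLt
      omega
    rw [Pi.single_eq_of_ne hik, map_zero]

lemma sum_single_succ {N : ℕ} (f : Fin N → V →L[ℝ] ℝ) (k : Fin (N + 1)) (v : V) :
    ∑ i : Fin N, f i ((Pi.single k v : Fin (N + 1) → V) i.succ) =
      if h : 1 ≤ (k : ℕ) then f ⟨(k : ℕ) - 1, by have := k.isLt; omega⟩ v else 0 := by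
  split_ifs with h
  · rw [Finset.sum_eq_single (⟨(k : ℕ) - 1, by have := k.isLt; omega⟩ : Fin N)]
    · have : ((⟨(k : ℕ) - 1, by have := k.isLt; omega⟩ : Fin N).succ : Fin (N + 1)) = k := by
        simp only [Fin.ext_iff, Fin.val_succ]
        omega
      rw [this, Pi.single_eq_same]
    · intro i _ hne
      have hval : (i : ℕ) ≠ (k : ℕ) - 1 := by
        intro e
        exact hne (Fin.ext (by simpa using e))
      have hik : (i.succ : Fin (N + 1)) ≠ k := by
        intro e
        have := congrArg Fin.val e
        simp only [Fin.val_succ] at this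
        omega
      rw [Pi.single_eq_of_ne hik, map_zero]
    · simp
  · apply Finset.sum_eq_zero
    intro i _
    have hik : (i.succ : Fin (N + 1)) ≠ k := by
      intro e
      have := congrArg Fin.val e
      simp only [Fin.val_succ] at this
      omega
    rw [Pi.single_eq_of_ne hik, map_zero]

/-- The discrete Euler-Lagrange equations for the space-evolution discrete
Lagrangian `N_d(𝛗_a, 𝛗_{a+1}) = Σ_{j=0}^{N-1} 𝓛_a^j` are equivalent to the
discrete covariant Euler-Lagrange equations together with the discrete
zero-momentum boundary conditions in time. -/
theorem space_evolution_DEL_iff_DCEL_and_zero_momentum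
    (N A : ℕ) (hN : 1 ≤ N) (hA : 2 ≤ A)
    (Lag : ℕ → ℕ → V × V × V → ℝ) (hLag : ∀ j a, ContDiff ℝ (⊤ : ℕ∞) (Lag j a))
    (φ : ℕ → ℕ → V) :
    -- first jet of the field on the triangle `Δ_a^j`
    let tri : ℕ → ℕ → V × V × V := fun j a => (φ j a, φ (j + 1) a, φ j (a + 1))
    -- space-evolution discrete Lagrangian on `V^{N+1} × V^{N+1}`
    let Nd : ℕ → ((Fin (N + 1) → V) × (Fin (N + 1) → V)) → ℝ := fun a p =>
      ∑ j : Fin N, Lag j.1 a (p.1 j.castSucc, p.1 j.succ, p.2 j.castSucc)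
    -- the vector of nodal values at space index `a`
    let Ψ : ℕ → Fin (N + 1) → V := fun a j => φ j.1 a
    ((∀ a, 1 ≤ a → a ≤ A - 1 →
        pD1 (Nd a) (Ψ a, Ψ (a + 1)) + pD2 (Nd (a - 1)) (Ψ (a - 1), Ψ a) = 0) ↔
      ((∀ j a, 1 ≤ j → j ≤ N - 1 → 1 ≤ a → a ≤ A - 1 →
          T1 (Lag j a) (tri j a) + T2 (Lag (j - 1) a) (tri (j - 1) a) +
            T3 (Lag j (a - 1)) (tri j (a - 1)) = 0) ∧
       (∀ a, 1 ≤ a → a ≤ A - 1 →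
          T1 (Lag 0 a) (tri 0 a) + T3 (Lag 0 (a - 1)) (tri 0 (a - 1)) = 0) ∧
       (∀ a, 1 ≤ a → a ≤ A - 1 →
          T2 (Lag (N - 1) a) (tri (N - 1) a) = 0))) := by
  intro tri Nd Ψ
  have hdiff : ∀ j a, Differentiable ℝ (Lag j a) := fun j a => (hLag j a).differentiable (by simp)
  have key : ∀ a : ℕ, 1 ≤ a → ∀ (k : Fin (N + 1)) (v : V),
      (pD1 (Nd a) (Ψ a, Ψ (a + 1)) + pD2 (Nd (a - 1)) (Ψ (a - 1), Ψ a)) (Pi.single k v)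
        = (if h : (k : ℕ) < N then
              T1 (Lag (k : ℕ) a) (tri (k : ℕ) a) v
                + T3 (Lag (k : ℕ) (a - 1)) (tri (k : ℕ) (a - 1)) v
            else 0)
          + (if h : 1 ≤ (k : ℕ) then
              T2 (Lag ((k : ℕ) - 1) a) (tri ((k : ℕ) - 1) a) v else 0) := by
    intro a ha k v
    have ha1 : a - 1 + 1 = a := by omega
    have htri : ∀ j : ℕ, tri j (a - 1) = (φ j (a - 1), φ (j + 1) (a - 1), φ j a) := by
      intro j
      show (φ j (a - 1), φ (j + 1) (a - 1), φ j (a - 1 + 1)) = _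
      rw [ha1]
    have e1 : pD1 (Nd a) (Ψ a, Ψ (a + 1)) (Pi.single k v)
        = ∑ j : Fin N, fderiv ℝ (Lag j.1 a) (tri j.1 a)
            ((Pi.single k v : Fin (N + 1) → V) j.castSucc,
              (Pi.single k v : Fin (N + 1) → V) j.succ, 0) :=
      pD1_sum (fun j => Lag j a) (fun j => hdiff j a) (Ψ a, Ψ (a + 1)) _
    have e2 : pD2 (Nd (a - 1)) (Ψ (a - 1), Ψ a) (Pi.single k v)
        = ∑ j : Fin N, fderiv ℝ (Lag j.1 (a - 1)) (tri j.1 (a - 1))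
            (0, 0, (Pi.single k v : Fin (N + 1) → V) j.castSucc) := by
      refine Eq.trans
        (pD2_sum (fun j => Lag j (a - 1)) (fun j => hdiff j (a - 1)) (Ψ (a - 1), Ψ a)
          (Pi.single k v)) ?_
      refine Finset.sum_congr rfl fun j _ => ?_
      rw [htri]
      rfl
    rw [ContinuousLinearMap.add_apply, e1, e2]
    have split1 : ∀ j : Fin N,
        fderiv ℝ (Lag j.1 a) (tri j.1 a)
            ((Pi.single k v : Fin (N + 1) → V) j.castSucc,
              (Pi.single k v : Fin (N + 1) → V) j.succ, 0)
          = T1 (Lag j.1 a) (tri j.1 a) ((Pi.single k v : Fin (N + 1) → V) j.castSucc)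
            + T2 (Lag j.1 a) (tri j.1 a) ((Pi.single k v : Fin (N + 1) → V) j.succ) := by
      intro j
      rw [T1_eq _ (hdiff _ _), T2_eq _ (hdiff _ _), ← map_add]
      congr 1
      simp [Prod.ext_iff]
    have split2 : ∀ j : Fin N,
        fderiv ℝ (Lag j.1 (a - 1)) (tri j.1 (a - 1))
            (0, 0, (Pi.single k v : Fin (N + 1) → V) j.castSucc)
          = T3 (Lag j.1 (a - 1)) (tri j.1 (a - 1))
              ((Pi.single k v : Fin (N + 1) → V) j.castSucc) :=
      fun j => (T3_eq _ (hdiff _ _) _ _).symm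
    simp only [split1, split2]
    rw [Finset.sum_add_distrib]
    rw [sum_single_cast (fun i => T1 (Lag i.1 a) (tri i.1 a)) k v,
        sum_single_succ (fun i => T2 (Lag i.1 a) (tri i.1 a)) k v,
        sum_single_cast (fun i => T3 (Lag i.1 (a - 1)) (tri i.1 (a - 1))) k v]
    split_ifs <;> ring
  constructor
  · intro hDEL
    refine ⟨?_, ?_, ?_⟩
    · intro j a hj1 hjN ha1 haA
      apply ContinuousLinearMap.ext; intro v
      have hk : j < N + 1 := by omega
      have hcomp := key a ha1 ⟨j, hk⟩ v
      rw [hDEL a ha1 haA] at hcomp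
      simp only [ContinuousLinearMap.zero_apply] at hcomp
      rw [dif_pos (show ((⟨j, hk⟩ : Fin (N + 1)) : ℕ) < N by simp; omega),
          dif_pos (show 1 ≤ ((⟨j, hk⟩ : Fin (N + 1)) : ℕ) by simp; omega)] at hcomp
      simp only [ContinuousLinearMap.add_apply, ContinuousLinearMap.zero_apply]
      linarith [hcomp]
    · intro a ha1 haA
      apply ContinuousLinearMap.ext; intro v
      have hcomp := key a ha1 0 v
      rw [hDEL a ha1 haA] at hcomp
      simp only [ContinuousLinearMap.zero_apply] at hcomp
      rw [dif_pos (show ((0 : Fin (N + 1)) : ℕ) < N by simp; omega),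
          dif_neg (show ¬ 1 ≤ ((0 : Fin (N + 1)) : ℕ) by simp)] at hcomp
      simp only [ContinuousLinearMap.add_apply, ContinuousLinearMap.zero_apply]
      simp only [Fin.val_zero] at hcomp
      linarith [hcomp]
    · intro a ha1 haA
      apply ContinuousLinearMap.ext; intro v
      have hcomp := key a ha1 (Fin.last N) v
      rw [hDEL a ha1 haA] at hcomp
      simp only [ContinuousLinearMap.zero_apply] at hcomp
      rw [dif_neg (show ¬ ((Fin.last N : Fin (N + 1)) : ℕ) < N by simp),
          dif_pos (show 1 ≤ ((Fin.last N : Fin (N + 1)) : ℕ) by simp; omega)] at hcomp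
      simp only [ContinuousLinearMap.zero_apply]
      simp only [Fin.val_last] at hcomp
      linarith [hcomp]
  · rintro ⟨h1, h2, h3⟩ a ha1 haA
    apply ContinuousLinearMap.ext; intro w
    have hw : w = ∑ k : Fin (N + 1), Pi.single k (w k) := (Finset.univ_sum_single w).symm
    rw [hw, map_sum]
    simp only [ContinuousLinearMap.zero_apply]
    apply Finset.sum_eq_zero
    intro k _
    rw [key a ha1 k (w k)]
    by_cases hk0 : (k : ℕ) = 0
    · rw [dif_pos (by omega), dif_neg (by omega)]
      have := ContinuousLinearMap.ext_iff.mp (h2 a ha1 haA) (w k)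
      simp only [ContinuousLinearMap.add_apply, ContinuousLinearMap.zero_apply] at this
      simp only [hk0]
      linarith [this]
    · by_cases hkN : (k : ℕ) < N
      · rw [dif_pos hkN, dif_pos (by omega)]
        have := ContinuousLinearMap.ext_iff.mp
          (h1 (k : ℕ) a (by omega) (by omega) ha1 haA) (w k)
        simp only [ContinuousLinearMap.add_apply, ContinuousLinearMap.zero_apply] at this
        linarith [this]
      · have hkN' : (k : ℕ) = N := by have := k.isLt; omega
        rw [dif_neg hkN, dif_pos (by omega)]
        have := ContinuousLinearMap.ext_iff.mp (h3 a ha1 haA) (w k)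
        simp only [ContinuousLinearMap.zero_apply] at this
        simp only [hkN']
        linarith [this]

end
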